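/- arXiv:1705.01931 — 4 statements merged into one kernel-verified Lean document; each statement's English description precedes it below -/
import Mathlib

section
/- If x * y is a plumbing of states and X ∈ C_{R,p→1}(x), X' ∈ C_{R,p→0}(x) are cycles that are identical away from the shared circle (through p), and Y ∈ C_{R,p→1}(y), Y' ∈ C_{R,p→0}(y) are chains such that Y + Y' is a cycle, then X * Y + X' * Y' is a cycle. -/
/-!
By the Leibniz rule, `d(X * Y + X' * Y') = dX ⋄* Y + dX' ⋄* Y' ± (X *⋄ dY + X' *⋄ dY')`.
The first two terms vanish because `X` and `X'` are cycles. The right-trump plumbing `X *⋄ -`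
only sees the labels of `X` away from the shared circle, so `X' *⋄ dY' = X *⋄ dY'`, and the
remaining term is `± X *⋄ d(Y + Y') = 0`.
-/

attribute [local instance] Classical.propDecidable

/-- The local datum of the Khovanov differential at a crossing: changing an A-smoothing
to a B-smoothing either merges two circles `i ≠ j` of the source state (via the
relabeling `f`) or splits one circle into two circles `i ≠ j` of the target state
(via the relabeling `g`). -/
inductive KTrans (m n : ℕ) : Type
  | merge (f : Fin m → Fin n) (i j : Fin m) (hij : i ≠ j) (hf : f i = f j)
  | split (g : Fin n → Fin m) (i j : Fin n) (hij : i ≠ j) (hg : g i = g j)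

/-- The merge/split maps of the Frobenius algebra `R[q]/(q²)` acting on enhancements
(`true` = label 1 = `q`, `false` = label 0 = `1`):
merge: `q⊗q ↦ 0`, `1⊗q, q⊗1 ↦ q`, `1⊗1 ↦ 1`; split: `q ↦ q⊗q`, `1 ↦ q⊗1 + 1⊗q`. -/
noncomputable def ktransApply {R : Type*} [CommRing R] {m n : ℕ} :
    KTrans m n → (Fin m → Bool) → ((Fin n → Bool) →₀ R)
  | .merge f i j _ _, a =>
      if a i = true ∧ a j = true then 0
      else Finsupp.single (fun l => decide (∃ k, f k = l ∧ a k = true)) 1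
  | .split g i j _ _, a =>
      if a (g i) = true then Finsupp.single (a ∘ g) 1
      else Finsupp.single (Function.update (a ∘ g) i true) 1
        + Finsupp.single (Function.update (a ∘ g) j true) 1

/-- A combinatorial model of a link diagram for Viro-style Khovanov homology:
`c` crossings, states `s : Fin c → Bool` (`true` = A-smoothing), each state having
`circ s` circles, and for every A-smoothed crossing of every state the merge/split
transition datum to the state with that smoothing changed to B. -/
structure Diagram where
  c : ℕ
  circ : (Fin c → Bool) → ℕ
  trans : ∀ (s : Fin c → Bool) (t : Fin c), s t = true →
    KTrans (circ s) (circ (Function.update s t false))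

namespace Diagram

/-- Enhanced states: a state together with a `{0,1}`-labeling of its circles. -/
abbrev Enh (D : Diagram) : Type := Σ s : Fin D.c → Bool, Fin (D.circ s) → Bool

variable {R : Type*} [CommRing R]

/-- The Khovanov differential of an enhanced state:
`d X = ∑_t (-1)^{|A|_X^t} d_{c^t} X`, where `|A|_X^t` counts A-smoothings at crossings
of smaller index and `d_{c^t}` is the merge/split map (zero at B-smoothings). -/
noncomputable def dE (D : Diagram) (X : D.Enh) : D.Enh →₀ R :=
  ∑ t : Fin D.c,
    if h : X.1 t = true then
      ((-1 : R) ^ (Finset.univ.filter fun r => r < t ∧ X.1 r = true).card) •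
        Finsupp.mapDomain (fun b => (⟨Function.update X.1 t false, b⟩ : D.Enh))
          (ktransApply (D.trans X.1 t h) X.2)
    else 0

/-- The Khovanov differential on the chain module `C_R(D)`, the free `R`-module on
enhanced states. -/
noncomputable def d (D : Diagram) (Z : D.Enh →₀ R) : D.Enh →₀ R :=
  Z.sum fun e r => r • D.dE e

end Diagram

theorem Finsupp.mapDomain_linearCombination {ι α β R : Type*} [Semiring R] (f : α → β)
    (v : ι → α →₀ R) (l : ι →₀ R) :
    Finsupp.mapDomain f (Finsupp.linearCombination R v l)
      = Finsupp.linearCombination R (fun i => Finsupp.mapDomain f (v i)) l :=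
  Finsupp.apply_linearCombination R (Finsupp.lmapDomain R R f) v l

namespace Diagram

variable {R : Type*} [CommRing R]

theorem d_eq_linearCombination (D : Diagram) (Z : D.Enh →₀ R) :
    D.d Z = Finsupp.linearCombination R D.dE Z :=
  rfl

theorem d_add (D : Diagram) (Z₁ Z₂ : D.Enh →₀ R) : D.d (Z₁ + Z₂) = D.d Z₁ + D.d Z₂ := by
  simp only [d_eq_linearCombination, map_add]

theorem d_mapDomain_mk (D : Diagram) (s : Fin D.c → Bool) (W : (Fin (D.circ s) → Bool) →₀ R) :
    D.d (Finsupp.mapDomain (fun a => (⟨s, a⟩ : D.Enh)) W)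
      = Finsupp.linearCombination R (fun a => D.dE ⟨s, a⟩) W := by
  rw [d_eq_linearCombination, Finsupp.linearCombination_mapDomain]
  rfl

end Diagram

section Plumbing

variable {R : Type*} [CommRing R] (Dx Dy : Diagram)
  (sx : Fin Dx.c → Bool) (sy : Fin Dy.c → Bool)
  (px : Fin (Dx.circ sx)) (py : Fin (Dy.circ sy))

/-- Enhanced-state basis for the chains in the plumbed diagram `D_x * D_y` reachable by
one application of the differential from the plumbed state `x * y`: either an enhanced
state of `D_x` (labels of all circles, including the shared circle) together with labels
of the non-shared circles of `y` (`Sum.inl`), or labels of the non-shared circles of `x`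
together with an enhanced state of `D_y` (`Sum.inr`). -/
abbrev PlumbEnh : Type :=
  (Dx.Enh × ({i : Fin (Dy.circ sy) // i ≠ py} → Bool)) ⊕
    (({i : Fin (Dx.circ sx) // i ≠ px} → Bool) × Dy.Enh)

/-- The Khovanov differential of the plumbed diagram on an enhancement of the plumbed
state `x * y` (crossings of `x` indexed before those of `y`): at `x`-crossings it acts
on the `x`-factor, and at `y`-crossings it acts on the `y`-labels (with the
shared-circle label taken from the `x`-factor), with the usual signs. -/
noncomputable def dzE (a : Fin (Dx.circ sx) → Bool)
    (bh : {i : Fin (Dy.circ sy) // i ≠ py} → Bool) :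
    PlumbEnh Dx Dy sx sy px py →₀ R :=
  (∑ t : Fin Dx.c,
    if h : sx t = true then
      ((-1 : R) ^ (Finset.univ.filter fun r => r < t ∧ sx r = true).card) •
        Finsupp.mapDomain
          (fun a' => Sum.inl ((⟨Function.update sx t false, a'⟩ : Dx.Enh), bh))
          (ktransApply (Dx.trans sx t h) a)
    else 0)
  + ((-1 : R) ^ (Finset.univ.filter fun r => sx r = true).card) •
    ∑ t : Fin Dy.c,
      if h : sy t = true then
        ((-1 : R) ^ (Finset.univ.filter fun r => r < t ∧ sy r = true).card) •
          Finsupp.mapDomain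
            (fun b' => Sum.inr ((fun i => a i.1),
              (⟨Function.update sy t false, b'⟩ : Dy.Enh)))
            (ktransApply (Dy.trans sy t h)
              (fun i => if hi : i = py then a px else bh ⟨i, hi⟩))
      else 0

/-- The differential of the plumbed diagram on chains supported on enhancements of the
plumbed state `x * y`. -/
noncomputable def dz
    (Z : ((Fin (Dx.circ sx) → Bool) × ({i : Fin (Dy.circ sy) // i ≠ py} → Bool)) →₀ R) :
    PlumbEnh Dx Dy sx sy px py →₀ R :=
  Z.sum fun e r => r • dzE Dx Dy sx sy px py e.1 e.2


theorem dz_eq_linearCombination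
    (Z : ((Fin (Dx.circ sx) → Bool) × ({i : Fin (Dy.circ sy) // i ≠ py} → Bool)) →₀ R) :
    dz Dx Dy sx sy px py Z
      = Finsupp.linearCombination R (fun e => dzE Dx Dy sx sy px py e.1 e.2) Z :=
  rfl

theorem dz_add
    (Z₁ Z₂ : ((Fin (Dx.circ sx) → Bool) × ({i : Fin (Dy.circ sy) // i ≠ py} → Bool)) →₀ R) :
    dz Dx Dy sx sy px py (Z₁ + Z₂) = dz Dx Dy sx sy px py Z₁ + dz Dx Dy sx sy px py Z₂ := by
  simp only [dz_eq_linearCombination, map_add]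

theorem dzE_eq_mapDomain_dE (a : Fin (Dx.circ sx) → Bool)
    (bh : {i : Fin (Dy.circ sy) // i ≠ py} → Bool) :
    dzE Dx Dy sx sy px py a bh
      = Finsupp.mapDomain (fun e => Sum.inl (e, bh)) (Dx.dE (R := R) ⟨sx, a⟩)
        + ((-1 : R) ^ (Finset.univ.filter fun r => sx r = true).card) •
          Finsupp.mapDomain (fun e => Sum.inr ((fun i => a i.1), e))
            (Dy.dE ⟨sy, fun i => if hi : i = py then a px else bh ⟨i, hi⟩⟩) := by
  rw [dzE, Diagram.dE, Diagram.dE, Finsupp.mapDomain_finsetSum, Finsupp.mapDomain_finsetSum]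
  refine congrArg₂ (· + ·) ?_ (congrArg _ ?_)
  all_goals
    refine Finset.sum_congr rfl fun t _ => ?_
    split_ifs
    · simp only [Finsupp.mapDomain_smul, ← Finsupp.mapDomain_comp]
      rfl
    · exact Finsupp.mapDomain_zero.symm

theorem dzE_restrict_of_apply_eq (a : Fin (Dx.circ sx) → Bool) (b : Fin (Dy.circ sy) → Bool)
    (h : a px = b py) :
    dzE Dx Dy sx sy px py a (fun i => b i.1)
      = Finsupp.mapDomain (fun e => Sum.inl (e, fun i => b i.1)) (Dx.dE (R := R) ⟨sx, a⟩)
        + ((-1 : R) ^ (Finset.univ.filter fun r => sx r = true).card) •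
          Finsupp.mapDomain (fun e => Sum.inr ((fun i => a i.1), e)) (Dy.dE ⟨sy, b⟩) := by
  have hglue : (fun i => if hi : i = py then a px else b i) = b := by
    funext i
    split_ifs with hi
    · rw [hi, h]
    · rfl
  rw [dzE_eq_mapDomain_dE, hglue]

/-- The product `X * Y`: the shared circle keeps its label from `X`, the one from `Y` is
forgotten. -/
noncomputable def plumbProd (X : (Fin (Dx.circ sx) → Bool) →₀ R)
    (Y : (Fin (Dy.circ sy) → Bool) →₀ R) :
    ((Fin (Dx.circ sx) → Bool) × ({i : Fin (Dy.circ sy) // i ≠ py} → Bool)) →₀ R :=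
  X.sum fun a ra => Y.sum fun b rb => Finsupp.single (a, fun i => b i.1) (ra * rb)

/-- The Leibniz rule `d(X * Y) = dX ⋄* Y + (-1)^{|x|_A} X *⋄ dY`. -/
theorem dz_plumbProd (X : (Fin (Dx.circ sx) → Bool) →₀ R) (Y : (Fin (Dy.circ sy) → Bool) →₀ R)
    (hXY : ∀ a ∈ X.support, ∀ b ∈ Y.support, a px = b py) :
    dz Dx Dy sx sy px py (plumbProd Dx Dy sx sy py X Y)
      = Finsupp.linearCombination R
          (fun b => Finsupp.mapDomain (fun e => Sum.inl (e, fun i => b i.1))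
            (Dx.d (Finsupp.mapDomain (fun a => (⟨sx, a⟩ : Dx.Enh)) X))) Y
        + ((-1 : R) ^ (Finset.univ.filter fun r => sx r = true).card) •
          Finsupp.linearCombination R
            (fun a => Finsupp.mapDomain (fun e => Sum.inr ((fun i => a i.1), e))
              (Dy.d (Finsupp.mapDomain (fun b => (⟨sy, b⟩ : Dy.Enh)) Y))) X := by
  have hsum : dz Dx Dy sx sy px py (plumbProd Dx Dy sx sy py X Y)
      = X.sum fun a ra => Y.sum fun b rb =>
          (ra * rb) • dzE Dx Dy sx sy px py a (fun i => b i.1) := by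
    simp only [plumbProd, dz_eq_linearCombination, map_finsuppSum,
      Finsupp.linearCombination_single]
  simp only [Diagram.d_mapDomain_mk, Finsupp.mapDomain_linearCombination]
  simp only [Finsupp.linearCombination_apply, Finsupp.smul_sum, smul_smul]
  rw [hsum, Finsupp.sum_comm Y, ← Finsupp.sum_add]
  refine Finsupp.sum_congr fun a ha => ?_
  rw [← Finsupp.sum_add]
  refine Finsupp.sum_congr fun b hb => ?_
  rw [dzE_restrict_of_apply_eq _ _ _ _ _ _ a b (hXY a ha b hb), smul_add, smul_smul,
    mul_comm (X a), mul_comm ((-1 : R) ^ _)]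

/-- If `x * y` is a plumbing of states, `X ∈ C_{R,p→1}(x)` and `X' ∈ C_{R,p→0}(x)` are
cycles that are identical away from the shared circle through `p`, and
`Y ∈ C_{R,p→1}(y)`, `Y' ∈ C_{R,p→0}(y)` are chains with `Y + Y'` a cycle, then
`X * Y + X' * Y'` is a cycle. -/
theorem plumbing_of_cycles
    (X X' : (Fin (Dx.circ sx) → Bool) →₀ R)
    (Y Y' : (Fin (Dy.circ sy) → Bool) →₀ R)
    (hX1 : ∀ a ∈ X.support, a px = true) (hX0 : ∀ a ∈ X'.support, a px = false)
    (hY1 : ∀ b ∈ Y.support, b py = true) (hY0 : ∀ b ∈ Y'.support, b py = false)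
    (hXcycle : Dx.d (Finsupp.mapDomain (fun a => (⟨sx, a⟩ : Dx.Enh)) X) = 0)
    (hX'cycle : Dx.d (Finsupp.mapDomain (fun a => (⟨sx, a⟩ : Dx.Enh)) X') = 0)
    (hXX' : Finsupp.mapDomain (fun a => Function.update a px false) X = X')
    (hYY'cycle : Dy.d (Finsupp.mapDomain (fun b => (⟨sy, b⟩ : Dy.Enh)) Y
        + Finsupp.mapDomain (fun b => (⟨sy, b⟩ : Dy.Enh)) Y') = 0) :
    dz Dx Dy sx sy px py (R := R)
        ((X.sum fun a ra => Y.sum fun b rb => Finsupp.single (a, fun i => b i.1) (ra * rb))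
          + (X'.sum fun a ra => Y'.sum fun b rb =>
              Finsupp.single (a, fun i => b i.1) (ra * rb))) = 0 := by
  have hcycle : Dy.d (Finsupp.mapDomain (fun b => (⟨sy, b⟩ : Dy.Enh)) Y)
      + Dy.d (Finsupp.mapDomain (fun b => (⟨sy, b⟩ : Dy.Enh)) Y') = 0 := by
    rwa [Diagram.d_add] at hYY'cycle
  have hrestrict (a : Fin (Dx.circ sx) → Bool) :
      (fun i : {i // i ≠ px} => Function.update a px false i.1) = fun i => a i.1 :=
    funext fun i => Function.update_of_ne i.2 _ _
  change dz Dx Dy sx sy px py (plumbProd Dx Dy sx sy py X Y + plumbProd Dx Dy sx sy py X' Y') = 0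
  rw [dz_add, dz_plumbProd _ _ _ _ _ _ X Y fun a ha b hb => (hX1 a ha).trans (hY1 b hb).symm,
    dz_plumbProd _ _ _ _ _ _ X' Y' fun a ha b hb => (hX0 a ha).trans (hY0 b hb).symm,
    hXcycle, hX'cycle, ← hXX', Finsupp.linearCombination_mapDomain]
  simp only [Finsupp.mapDomain_zero, Function.comp_def, hrestrict]
  simp only [Finsupp.linearCombination_apply, smul_zero, Finsupp.sum_fun_zero, zero_add,
    ← smul_add, ← Finsupp.sum_add, ← Finsupp.mapDomain_add, hcycle, Finsupp.mapDomain_zero]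

end Plumbing
end

section
/- Let x be a homogeneous state (each block is all-A or all-B). If X and Y are enhancements of x with X ∼_A Y and X ∼_B Y, then X = Y; i.e., [X]_A ∩ [X]_B = {X}. -/
/-- Swap the labels on the two endpoint circles of a crossing arc. -/
def swapAt {n : ℕ} (e : Fin n × Fin n) (a : Fin n → Bool) : Fin n → Bool :=
  Function.update (Function.update a e.1 (a e.2)) e.2 (a e.1)

/-- The equivalence relation `∼_A` (for `v = true`) resp. `∼_B` (for `v = false`) on
enhancements of a state, generated by swapping the labels on the two endpoint circles of
an arc of the corresponding type (`sm t = true` means an A-arc at crossing `t`, and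
`ep t` gives the two circles the arc joins). -/
def RelLab {c n : ℕ} (sm : Fin c → Bool) (ep : Fin c → Fin n × Fin n) (v : Bool) :
    (Fin n → Bool) → (Fin n → Bool) → Prop :=
  Relation.ReflTransGen fun a b => ∃ t, sm t = v ∧ b = swapAt (ep t) a

/-- Connectivity of circles through arcs of a fixed type: `Conn sm ep true i j` says the
circles `i`, `j` lie in the same A-zone (`v = false`: same B-zone). -/
def Conn {c n : ℕ} (sm : Fin c → Bool) (ep : Fin c → Fin n × Fin n) (v : Bool) :
    Fin n → Fin n → Prop :=
  Relation.ReflTransGen fun i j => ∃ t, sm t = v ∧ (ep t = (i, j) ∨ ep t = (j, i))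

/-- Homogeneity of a state: no simple cycle of the state graph contains arcs of both
types (equivalently, every block of the state graph is all-A or all-B). -/
def Homog {c n : ℕ} (sm : Fin c → Bool) (ep : Fin c → Fin n × Fin n) : Prop :=
  ∀ (k : ℕ), 2 ≤ k → ∀ (te : ZMod k → Fin c) (ve : ZMod k → Fin n),
    Function.Injective te → Function.Injective ve →
    (∀ i, ep (te i) = (ve i, ve (i + 1)) ∨ ep (te i) = (ve (i + 1), ve i)) →
    ∀ i j, sm (te i) = sm (te j)

/-!
Put `g = [X] - [Y]` on the circles. Swapping labels along an arc of one type does not change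
the number of 1-labels in any zone of that type, so `g` sums to zero over every A-zone and every
B-zone. On a homogeneous state such a `g` vanishes, by induction on the number of arcs. An arc
whose endpoints are joined by the other arcs of its type can be deleted without changing any
zone. If no arc is of this kind, there is no simple cycle at all, since homogeneity makes each
cycle single-typed and then all its arcs are of this kind. Hence some circle `q` meets exactly
one arc; `q` is alone in its zone of the other type, so `g q = 0`, and deleting the arc keeps
all zone sums zero.
-/

open Finset Relation Function

def Joins {V : Type*} (e : V × V) (i j : V) : Prop := e = (i, j) ∨ e = (j, i)

theorem Joins.symm {V : Type*} {e : V × V} {i j : V} (h : Joins e i j) : Joins e j i := Or.symm h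

theorem Joins.eq_and_eq_or_eq_and_eq {V : Type*} {e : V × V} {a b c d : V}
    (h₁ : Joins e a b) (h₂ : Joins e c d) : a = c ∧ b = d ∨ a = d ∧ b = c := by
  rcases h₁ with rfl | rfl <;> rcases h₂ with h | h <;> simp_all [Prod.ext_iff]

section Zones

variable {c n : ℕ} {sm : Fin c → Bool} {ep : Fin c → Fin n × Fin n} {v : Bool} {i j : Fin n}

theorem Conn.single {t : Fin c} (ht : sm t = v) (h : Joins (ep t) i j) : Conn sm ep v i j :=
  ReflTransGen.single ⟨t, ht, h⟩

theorem Conn.symm (h : Conn sm ep v i j) : Conn sm ep v j i := by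
  induction h with
  | refl => exact ReflTransGen.refl
  | tail _ hstep ih =>
    obtain ⟨t, ht, hj⟩ := hstep
    exact ih.head ⟨t, ht, hj.symm⟩

theorem Conn.eq_of_isolated (hi : ∀ t, sm t = v → ∀ w, Joins (ep t) i w → w = i)
    (h : Conn sm ep v i j) : j = i := by
  induction h with
  | refl => rfl
  | tail _ hstep ih =>
    obtain ⟨t, ht, hj⟩ := hstep
    subst ih
    exact hi t ht _ hj

theorem Conn.of_comp {c' : ℕ} {f : Fin c' → Fin c} (h : Conn (sm ∘ f) (ep ∘ f) v i j) :
    Conn sm ep v i j :=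
  ReflTransGen.mono (fun _ _ ⟨s, hs, hj⟩ => ⟨f s, hs, hj⟩) _ _ h

theorem Homog.comp {c' : ℕ} {f : Fin c' → Fin c} (hf : Injective f) (h : Homog sm ep) :
    Homog (sm ∘ f) (ep ∘ f) :=
  fun k hk te ve hte hve hj => h k hk (f ∘ te) ve (hf.comp hte) hve hj

variable (sm ep) in
open Classical in
noncomputable def zone (v : Bool) (i : Fin n) : Finset (Fin n) :=
  univ.filter (Conn sm ep v i)

theorem mem_zone : j ∈ zone sm ep v i ↔ Conn sm ep v i j := by
  simp [zone]

theorem zone_eq_singleton (hi : ∀ t, sm t = v → ∀ w, Joins (ep t) i w → w = i) :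
    zone sm ep v i = {i} := by
  ext j
  rw [mem_zone, mem_singleton]
  exact ⟨Conn.eq_of_isolated hi, fun h => h ▸ ReflTransGen.refl⟩

theorem swapAt_eq_comp_swap (e : Fin n × Fin n) (a : Fin n → Bool) :
    swapAt e a = a ∘ Equiv.swap e.1 e.2 := by
  funext j
  simp only [swapAt, update_apply, comp_apply, Equiv.swap_apply_def]
  split_ifs <;> simp_all

theorem conn_swap_iff {t : Fin c} (ht : sm t = v) :
    Conn sm ep v i (Equiv.swap (ep t).1 (ep t).2 j) ↔ Conn sm ep v i j := by
  have hstep : Conn sm ep v (ep t).1 (ep t).2 := Conn.single ht (Or.inl rfl)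
  rw [Equiv.swap_apply_def]
  split_ifs with h₁ h₂
  · subst h₁
    exact ⟨fun h => h.trans hstep.symm, fun h => h.trans hstep⟩
  · subst h₂
    exact ⟨fun h => h.trans hstep, fun h => h.trans hstep.symm⟩
  · rfl

theorem sum_zone_eq_of_relLab {M : Type*} [AddCommMonoid M] (φ : Bool → M) {X Y : Fin n → Bool}
    (h : RelLab sm ep v X Y) : ∑ j ∈ zone sm ep v i, φ (X j) = ∑ j ∈ zone sm ep v i, φ (Y j) := by
  induction h with
  | refl => rfl
  | tail _ hstep ih =>
    obtain ⟨t, ht, rfl⟩ := hstep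
    rw [ih, swapAt_eq_comp_swap]
    exact Finset.sum_equiv (Equiv.swap (ep t).1 (ep t).2)
      (fun j => by simp only [mem_zone, conn_swap_iff ht]) (fun _ _ => by simp)

end Zones

section DeleteArc

variable {c n : ℕ} {sm : Fin (c + 1) → Bool} {ep : Fin (c + 1) → Fin n × Fin n}
  {t₀ : Fin (c + 1)} {v : Bool} {i j p q : Fin n}

theorem conn_comp_succAbove_of_joins {t : Fin (c + 1)} (hne : t ≠ t₀) (ht : sm t = v)
    (h : Joins (ep t) i j) : Conn (sm ∘ t₀.succAbove) (ep ∘ t₀.succAbove) v i j := by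
  obtain ⟨s, rfl⟩ := Fin.exists_succAbove_eq hne
  exact Conn.single ht h

theorem Conn.comp_succAbove (h : Conn sm ep v i j)
    (ht₀ : sm t₀ = v → Conn (sm ∘ t₀.succAbove) (ep ∘ t₀.succAbove) v (ep t₀).1 (ep t₀).2) :
    Conn (sm ∘ t₀.succAbove) (ep ∘ t₀.succAbove) v i j := by
  induction h with
  | refl => exact ReflTransGen.refl
  | tail _ hstep ih =>
    obtain ⟨t, ht, hj⟩ := hstep
    by_cases hne : t = t₀
    · subst hne
      rcases hj with he | he <;> rw [he] at ht₀
      · exact ih.trans (ht₀ ht)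
      · exact ih.trans (ht₀ ht).symm
    · exact ih.trans (conn_comp_succAbove_of_joins hne ht hj)

theorem zone_comp_succAbove
    (ht₀ : sm t₀ = v → Conn (sm ∘ t₀.succAbove) (ep ∘ t₀.succAbove) v (ep t₀).1 (ep t₀).2) :
    zone (sm ∘ t₀.succAbove) (ep ∘ t₀.succAbove) v i = zone sm ep v i := by
  ext j
  simp only [mem_zone]
  exact ⟨Conn.of_comp, fun h => h.comp_succAbove ht₀⟩

theorem Conn.comp_succAbove_of_leaf (ht₀ : Joins (ep t₀) p q) (hpq : p ≠ q)
    (hq : ∀ t ≠ t₀, ∀ w, ¬ Joins (ep t) q w) (hi : i ≠ q) (h : Conn sm ep v i j) :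
    j = q ∧ Conn (sm ∘ t₀.succAbove) (ep ∘ t₀.succAbove) v i p ∨
      j ≠ q ∧ Conn (sm ∘ t₀.succAbove) (ep ∘ t₀.succAbove) v i j := by
  induction h with
  | refl => exact Or.inr ⟨hi, ReflTransGen.refl⟩
  | @tail x y _ hstep ih =>
    obtain ⟨t, ht, hxy⟩ := hstep
    by_cases hne : t = t₀
    · subst hne
      rcases ih with ⟨rfl, ih⟩ | ⟨hx, ih⟩
      · rcases Joins.eq_and_eq_or_eq_and_eq hxy ht₀ with ⟨hqp, -⟩ | ⟨-, rfl⟩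
        · exact absurd hqp.symm hpq
        · exact Or.inr ⟨hpq, ih⟩
      · rcases Joins.eq_and_eq_or_eq_and_eq hxy ht₀ with ⟨rfl, rfl⟩ | ⟨hxq, -⟩
        · exact Or.inl ⟨rfl, ih⟩
        · exact absurd hxq hx
    · rcases ih with ⟨rfl, -⟩ | ⟨hx, ih⟩
      · exact absurd hxy (hq t hne y)
      · have hy : y ≠ q := by
          rintro rfl
          exact hq t hne x hxy.symm
        exact Or.inr ⟨hy, ih.trans (conn_comp_succAbove_of_joins hne ht hxy)⟩

theorem sum_zone_comp_succAbove_of_leaf {M : Type*} [AddCommMonoid M] {g : Fin n → M}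
    (ht₀ : Joins (ep t₀) p q) (hpq : p ≠ q) (hq : ∀ t ≠ t₀, ∀ w, ¬ Joins (ep t) q w)
    (hg : ∀ v i, ∑ j ∈ zone sm ep v i, g j = 0) (v : Bool) (i : Fin n) :
    ∑ j ∈ zone (sm ∘ t₀.succAbove) (ep ∘ t₀.succAbove) v i, g j = 0 := by
  have hq' : ∀ t ≠ t₀, ∀ w, Joins (ep t) q w → w = q := fun t ht w h => absurd h (hq t ht w)
  have hgq : g q = 0 := by
    have := hg (!sm t₀) q
    rwa [zone_eq_singleton (fun t ht => hq' t (by rintro rfl; simp at ht)), sum_singleton]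
      at this
  by_cases hv : v = sm t₀
  · subst hv
    by_cases hi : i = q
    · subst hi
      rw [zone_eq_singleton (ep := ep ∘ t₀.succAbove) (fun s _ => hq' _ (Fin.succAbove_ne t₀ s)),
        sum_singleton, hgq]
    · rw [← hg (sm t₀) i]
      refine sum_subset (fun j hj => mem_zone.2 (mem_zone.1 hj).of_comp) fun j hj hj' => ?_
      rcases (mem_zone.1 hj).comp_succAbove_of_leaf ht₀ hpq hq hi with ⟨rfl, -⟩ | ⟨-, h⟩
      · exact hgq
      · exact absurd (mem_zone.2 h) hj'
  · rw [zone_comp_succAbove (fun h => absurd h.symm hv)]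
    exact hg v i

end DeleteArc

section Cycles

variable {ι V : Type*} {ep : ι → V × V}

variable (ep) in
def IsSimpleCycle {k : ℕ} (te : ZMod k → ι) (ve : ZMod k → V) : Prop :=
  Injective te ∧ Injective ve ∧ ∀ m, Joins (ep (te m)) (ve m) (ve (m + 1))

theorem exists_nonbacktracking_walk
    (hdeg : ∀ t x y, Joins (ep t) x y → ∃ t' ≠ t, ∃ z, Joins (ep t') y z) (t : ι) :
    ∃ (u : ℕ → V) (a : ℕ → ι),
      (∀ m, Joins (ep (a m)) (u m) (u (m + 1))) ∧ ∀ m, a (m + 1) ≠ a m := by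
  let S := {s : ι × V × V // Joins (ep s.1) s.2.1 s.2.2}
  have hnext : ∀ s : S, ∃ s' : S, s'.1.1 ≠ s.1.1 ∧ s'.1.2.1 = s.1.2.2 := by
    rintro ⟨⟨t, x, y⟩, h⟩
    obtain ⟨t', hne, z, h'⟩ := hdeg t x y h
    exact ⟨⟨⟨t', y, z⟩, h'⟩, hne, rfl⟩
  choose next hnext_ne hnext_fst using hnext
  let walk : ℕ → S := fun m => next^[m] ⟨⟨t, ep t⟩, Or.inl rfl⟩
  refine ⟨fun m => (walk m).1.2.1, fun m => (walk m).1.1, fun m => ?_, fun m => ?_⟩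
  · simp only [walk, iterate_succ_apply', hnext_fst]
    exact (walk m).2
  · simp only [walk, iterate_succ_apply']
    exact hnext_ne _

theorem isSimpleCycle_of_closed_walk {u : ℕ → V} {a : ℕ → ι} {k : ℕ} (hk : 2 ≤ k)
    (hjoin : ∀ m, Joins (ep (a m)) (u m) (u (m + 1))) (hclosed : u k = u 0)
    (hu : Set.InjOn u (Set.Iio k)) (ha : Set.InjOn a (Set.Iio k)) :
    IsSimpleCycle ep (fun m : ZMod k => a m.val) (fun m => u m.val) := by
  have : Fact (1 < k) := ⟨hk⟩
  refine ⟨fun x y h => ZMod.val_injective k (ha (ZMod.val_lt x) (ZMod.val_lt y) h),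
    fun x y h => ZMod.val_injective k (hu (ZMod.val_lt x) (ZMod.val_lt y) h), fun m => ?_⟩
  have hsucc : u (m + 1).val = u (m.val + 1) := by
    rw [ZMod.val_add, ZMod.val_one]
    rcases (Nat.succ_le_of_lt (ZMod.val_lt m)).lt_or_eq with hlt | heq
    · rw [Nat.mod_eq_of_lt hlt]
    · rw [show m.val + 1 = k from heq, Nat.mod_self, hclosed]
  show Joins (ep (a m.val)) (u m.val) (u (m + 1).val)
  rw [hsucc]
  exact hjoin m.val

theorem exists_isSimpleCycle_of_walk [Finite V] (hloop : ∀ t x, ¬ Joins (ep t) x x)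
    {u : ℕ → V} {a : ℕ → ι} (hjoin : ∀ m, Joins (ep (a m)) (u m) (u (m + 1)))
    (hback : ∀ m, a (m + 1) ≠ a m) :
    ∃ k, 2 ≤ k ∧ ∃ (te : ZMod k → ι) (ve : ZMod k → V), IsSimpleCycle ep te ve := by
  classical
  have hrep : ∃ j, ∃ i < j, u i = u j := by
    obtain ⟨x, y, hne, h⟩ := Finite.exists_ne_map_eq_of_infinite u
    rcases hne.lt_or_gt with hlt | hlt
    · exact ⟨y, x, hlt, h⟩
    · exact ⟨x, y, hlt, h.symm⟩
  obtain ⟨i, hij, hi⟩ := Nat.find_spec hrep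
  set j := Nat.find hrep
  have hu : Set.InjOn u (Set.Iio j) := by
    intro x hx y hy hxy
    by_contra hne
    rcases Ne.lt_or_gt hne with hlt | hlt
    · exact Nat.find_min hrep hy ⟨x, hlt, hxy⟩
    · exact Nat.find_min hrep hx ⟨y, hlt, hxy.symm⟩
  -- an arc repeated before the walk first revisits a circle would be an immediate backtrack
  have ha : ∀ m m', i ≤ m → m < m' → m' < j → a m ≠ a m' := by
    intro m m' him hmm' hm'j heq
    rcases Joins.eq_and_eq_or_eq_and_eq (hjoin m) (heq ▸ hjoin m') with ⟨h₁, -⟩ | ⟨h₁, h₂⟩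
    · exact hmm'.ne (hu (show m < j by omega) hm'j h₁)
    · obtain rfl : m + 1 = m' := hu (show m + 1 < j by omega) hm'j h₂
      obtain rfl : m = i := by
        rcases (show m + 1 + 1 ≤ j by omega).lt_or_eq with hlt | hlt
        · exact absurd (hu (show m < j by omega) hlt h₁) (by omega)
        · rw [hlt, ← hi] at h₁
          exact hu (show m < j by omega) hij h₁
      exact hback m heq.symm
  have hk : 2 ≤ j - i := by
    by_contra hk
    have hclose : u (i + 1) = u i := by rw [show i + 1 = j by omega, hi]
    exact hloop (a i) (u i) (hclose ▸ hjoin i)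
  refine ⟨j - i, hk, _, _, isSimpleCycle_of_closed_walk (u := fun m => u (i + m))
    (a := fun m => a (i + m)) hk (fun m => hjoin (i + m))
    (by simp only [add_zero, Nat.add_sub_cancel' hij.le, hi]) ?_ ?_⟩
  · intro x hx y hy h
    simp only [Set.mem_Iio] at hx hy
    have := hu (show i + x < j by omega) (show i + y < j by omega) h
    omega
  · intro x hx y hy h
    simp only [Set.mem_Iio] at hx hy
    by_contra hne
    rcases Ne.lt_or_gt hne with hlt | hlt
    · exact ha (i + x) (i + y) (by omega) (by omega) (by omega) h
    · exact ha (i + y) (i + x) (by omega) (by omega) (by omega) h.symm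

end Cycles

section Homogeneous

variable {c n : ℕ}

theorem IsSimpleCycle.conn_comp_succAbove {sm : Fin (c + 1) → Bool}
    {ep : Fin (c + 1) → Fin n × Fin n} {k : ℕ} {te : ZMod k → Fin (c + 1)} {ve : ZMod k → Fin n}
    (hk : 0 < k) (hc : IsSimpleCycle ep te ve) (hmono : ∀ m, sm (te m) = sm (te 0)) :
    Conn (sm ∘ (te 0).succAbove) (ep ∘ (te 0).succAbove) (sm (te 0))
      (ep (te 0)).1 (ep (te 0)).2 := by
  have hchain : ∀ m, 1 ≤ m → m ≤ k →
      Conn (sm ∘ (te 0).succAbove) (ep ∘ (te 0).succAbove) (sm (te 0)) (ve 1) (ve m) := by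
    intro m hm hmk
    induction m, hm using Nat.le_induction with
    | base => simp only [Nat.cast_one]; exact ReflTransGen.refl
    | succ m hm ih =>
      refine (ih (by omega)).trans
        (conn_comp_succAbove_of_joins (t := te m) (fun h => ?_) (hmono _) ?_)
      · exact absurd (Nat.le_of_dvd hm ((ZMod.natCast_eq_zero_iff m k).mp (hc.1 h))) (by omega)
      · push_cast
        exact hc.2.2 m
  have hback :
      Conn (sm ∘ (te 0).succAbove) (ep ∘ (te 0).succAbove) (sm (te 0)) (ve 1) (ve 0) := by
    simpa using hchain k hk le_rfl
  rcases hc.2.2 0 with h | h <;> rw [h] <;> simp only [zero_add]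
  · exact hback.symm
  · exact hback

theorem Homog.exists_redundant_or_leaf {sm : Fin (c + 1) → Bool}
    {ep : Fin (c + 1) → Fin n × Fin n} (hhom : Homog sm ep) :
    (∃ t₀, Conn (sm ∘ t₀.succAbove) (ep ∘ t₀.succAbove) (sm t₀) (ep t₀).1 (ep t₀).2) ∨
      ∃ t₀ p q, Joins (ep t₀) p q ∧ p ≠ q ∧ ∀ t ≠ t₀, ∀ w, ¬ Joins (ep t) q w := by
  by_contra! h
  obtain ⟨hred, hleaf⟩ := h
  have hloop : ∀ t x, ¬ Joins (ep t) x x := by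
    rintro t x (h | h) <;> exact hred t (by rw [h]; exact ReflTransGen.refl)
  obtain ⟨u, a, hjoin, hback⟩ := exists_nonbacktracking_walk
    (fun t x y h => hleaf t x y h fun hxy => hloop t y (hxy ▸ h)) 0
  obtain ⟨k, hk, te, ve, hc⟩ := exists_isSimpleCycle_of_walk hloop hjoin hback
  exact hred (te 0)
    (hc.conn_comp_succAbove (by omega) fun m => hhom k hk te ve hc.1 hc.2.1 hc.2.2 m 0)

theorem Homog.eq_zero_of_sum_zone_eq_zero {M : Type*} [AddCommMonoid M] {sm : Fin c → Bool}
    {ep : Fin c → Fin n × Fin n} {g : Fin n → M} (hhom : Homog sm ep)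
    (hg : ∀ v i, ∑ j ∈ zone sm ep v i, g j = 0) : g = 0 := by
  induction c with
  | zero =>
    funext i
    simpa [zone_eq_singleton (sm := sm) (ep := ep) (v := true) (i := i) (fun t => t.elim0)]
      using hg true i
  | succ c ih =>
    have hhom' (t₀ : Fin (c + 1)) := hhom.comp (Fin.succAbove_right_injective (p := t₀))
    rcases hhom.exists_redundant_or_leaf with ⟨t₀, h⟩ | ⟨t₀, p, q, ht₀, hpq, hq⟩
    · refine ih (hhom' t₀) fun v i => ?_
      rw [zone_comp_succAbove fun hv => hv ▸ h]
      exact hg v i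
    · exact ih (hhom' t₀) (sum_zone_comp_succAbove_of_leaf ht₀ hpq hq hg)

end Homogeneous

/-- For a homogeneous state `x`, the `A`- and `B`-equivalence classes of an enhancement
`X` intersect only in `X`: if `X ∼_A Y` and `X ∼_B Y` then `X = Y`. -/
theorem homogeneous_classes_intersect_trivially (c n : ℕ) (sm : Fin c → Bool)
    (ep : Fin c → Fin n × Fin n) (hhom : Homog sm ep) (X Y : Fin n → Bool)
    (hA : RelLab sm ep true X Y) (hB : RelLab sm ep false X Y) : X = Y := by
  have hbal : ∀ v i, ∑ j ∈ zone sm ep v i, (((X j).toNat : ℤ) - (Y j).toNat) = 0 := by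
    intro v i
    rw [sum_sub_distrib, sub_eq_zero]
    cases v
    · exact sum_zone_eq_of_relLab (fun b => (b.toNat : ℤ)) hB
    · exact sum_zone_eq_of_relLab (fun b => (b.toNat : ℤ)) hA
  funext j
  have h := sub_eq_zero.mp (congrFun (hhom.eq_zero_of_sum_zone_eq_zero hbal) j)
  revert h
  cases X j <;> cases Y j <;> simp
end

section
/- Let X be an enhancement of a state x of a diagram D such that [X]_A ∩ [X]_B = {X} and such that ε ∘ π_{[X]_B} ∘ d maps C_R(D) into 2R, where 2R ⊊ R. Then the A-trace tr_R(X) is not exact: there is no chain Y with dY = tr_R(X). -/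
attribute [local instance] Classical.propDecidable

theorem Finsupp.finset_sum_single_apply_of_injective {ι α M : Type*} [AddCommMonoid M]
    [DecidableEq ι] {k : ι → α} (hk : Function.Injective k) (s : Finset ι) (g : ι → M)
    (b : ι) : (∑ a ∈ s, Finsupp.single (k a) (g a)) (k b) = if b ∈ s then g b else 0 := by
  simp only [Finsupp.finsetSum_apply, Finsupp.single_apply_left hk, Finsupp.single_apply]
  exact Finset.sum_ite_eq' s b g

theorem Finsupp.sum_finset_sum_single_apply_of_injective {ι α M : Type*} [AddCommMonoid M]
    [DecidableEq ι] {k : ι → α} (hk : Function.Injective k) (s t : Finset ι) (g : ι → M) :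
    ∑ b ∈ t, (∑ a ∈ s, Finsupp.single (k a) (g a)) (k b) = ∑ b ∈ t ∩ s, g b := by
  simp only [Finsupp.finset_sum_single_apply_of_injective hk, Finset.sum_ite_mem]

theorem trace_not_exact_general (R : Type*) [CommRing R] (D : Diagram) (s0 : Fin D.c → Bool)
    (ep : Fin D.c → Fin (D.circ s0) × Fin (D.circ s0))
    (X : Fin (D.circ s0) → Bool)
    (hinter : ∀ Y, RelLab s0 ep true X Y → RelLab s0 ep false X Y → Y = X)
    (sgn : (Fin (D.circ s0) → Bool) → R)
    (hsgnX : sgn X = 1)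
    (h2R : ∀ Z : D.Enh →₀ R, ∃ r : R,
      (∑ b ∈ Finset.univ.filter (fun b => RelLab s0 ep false X b),
        (D.d Z) ⟨s0, b⟩) = 2 * r)
    (hnotunit : ¬ ∃ u : R, 2 * u = 1) :
    ¬ ∃ Z : D.Enh →₀ R, D.d Z
        = ∑ b ∈ Finset.univ.filter (fun b => RelLab s0 ep true X b),
            Finsupp.single (⟨s0, b⟩ : D.Enh) (sgn b) := by
  rintro ⟨Z, hZ⟩
  obtain ⟨r, hr⟩ := h2R Z
  have hclasses : Finset.univ.filter (fun b => RelLab s0 ep false X b)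
      ∩ Finset.univ.filter (fun b => RelLab s0 ep true X b) = {X} := by
    ext Y
    simp only [Finset.mem_inter, Finset.mem_filter, Finset.mem_univ, true_and,
      Finset.mem_singleton]
    refine ⟨fun ⟨hB, hA⟩ => hinter Y hA hB, ?_⟩
    rintro rfl
    exact ⟨.refl, .refl⟩
  have hproj : ∑ b ∈ Finset.univ.filter (fun b => RelLab s0 ep false X b),
      (D.d Z) ⟨s0, b⟩ = 1 := by
    rw [hZ, Finsupp.sum_finset_sum_single_apply_of_injective
      (sigma_mk_injective (β := fun s => Fin (D.circ s) → Bool) (i := s0)), hclasses,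
      Finset.sum_singleton, hsgnX]
  exact hnotunit ⟨r, by rw [← hr, hproj]⟩

/-- If `X` enhances a state `x` (state `s0` of the diagram `D`) with
`[X]_A ∩ [X]_B = {X}`, and `ε ∘ π_{[X]_B} ∘ d` maps `C_R(D)` into `2R` where `2R ⊊ R`
(2 is not a unit), then the (signed) A-trace `tr_R(X) = ∑_{X' ∼_A X} (±1)·X'` is not
exact: no chain `Z` satisfies `dZ = tr_R(X)`. -/
theorem trace_not_exact (R : Type*) [CommRing R] (D : Diagram) (s0 : Fin D.c → Bool)
    (ep : Fin D.c → Fin (D.circ s0) × Fin (D.circ s0))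
    (X : Fin (D.circ s0) → Bool)
    (hinter : ∀ Y, RelLab s0 ep true X Y → RelLab s0 ep false X Y → Y = X)
    (sgn : (Fin (D.circ s0) → Bool) → R)
    (hsgnX : sgn X = 1) (hsgnpm : ∀ a, sgn a = 1 ∨ sgn a = -1)
    (h2R : ∀ Z : D.Enh →₀ R, ∃ r : R,
      (∑ b ∈ Finset.univ.filter (fun b => RelLab s0 ep false X b),
        (D.d Z) ⟨s0, b⟩) = 2 * r)
    (hnotunit : ¬ ∃ u : R, 2 * u = 1) :
    ¬ ∃ Z : D.Enh →₀ R, D.d Z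
        = ∑ b ∈ Finset.univ.filter (fun b => RelLab s0 ep true X b),
            Finsupp.single (⟨s0, b⟩ : D.Enh) (sgn b) :=
  trace_not_exact_general R D s0 ep X hinter sgn hsgnX h2R hnotunit
end

section
/- Every homogeneously adequate state x admits, for any marked point p on a circle away from crossing arcs, two enhancements X⁻ and X⁺, identical away from p, with the circle through p labeled 1 in X⁻ and 0 in X⁺, such that every A-zone has at most one 0-labeled circle and every B-zone has at most one 1-labeled circle in both X⁺ and X⁻. In particular j(X⁺) = j(X⁻) + 2. -/
/-!
Let `G` be the state graph and `H_A`, `H_B` its subgraphs of A- and B-arcs. Homogeneity says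
that every cycle of `G` lies in `H_A` or in `H_B`, and (cycles of length two) that no A-arc is
parallel to a B-arc.

Root each component of `G`, the component of `p₀` at `p₀`, and label a circle `1` iff some path
from it to the root leaves it along an A-arc; this is `X⁺`. For `H = H_A` or `H_B`, every circle
of an `H`-zone starts a path to the root along an `H`-arc, except the circle where a path from
the root first enters the zone. So an A-zone has at most one `0`, and a B-zone at most one circle
labelled `1` in `X⁻` (the root relabelled `1`): such a circle is the root or starts a path along
an A-arc, and then none along a B-arc, since two such paths would close up to a mixed cycle.
As `X⁻` has fewer `0`s and `X⁺` fewer `1`s, both bounds hold for both labellings.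
-/

namespace SimpleGraph

variable {V : Type*} {G H H₁ H₂ : SimpleGraph V}

def HasPathStartingIn (G H : SimpleGraph V) (k r : V) : Prop :=
  ∃ p : G.Walk k r, p.IsPath ∧ H.Adj k p.snd

lemma not_hasPathStartingIn_self (r : V) : ¬G.HasPathStartingIn H r r := by
  rintro ⟨p, hp, hadj⟩
  rw [Walk.isPath_iff_nil.mp hp |>.eq_nil] at hadj
  exact hadj.ne rfl

lemma Walk.exists_isPath_support_tail_notMem (S : Set V) {r : V} :
    ∀ {x : V} (p : G.Walk x r), p.IsPath → (∃ v ∈ p.support, v ∈ S) →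
      ∃ e ∈ S, ∃ q : G.Walk e r, q.IsPath ∧ ∀ v ∈ q.support.tail, v ∉ S
  | _, .nil, _, ⟨v, hv, hvS⟩ => by
    rw [Walk.support_nil, List.mem_singleton] at hv
    subst hv
    exact ⟨_, hvS, .nil, .nil, by simp⟩
  | x, .cons h p, hp, hS => by
    by_cases hpS : ∃ v ∈ p.support, v ∈ S
    · exact p.exists_isPath_support_tail_notMem S hp.of_cons hpS
    · push Not at hpS
      have hx : x ∈ S := by
        obtain ⟨v, hv, hvS⟩ := hS
        rcases List.mem_cons.mp (Walk.support_cons h p ▸ hv) with rfl | hv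
        exacts [hvS, absurd hvS (hpS v hv)]
      exact ⟨x, hx, .cons h p, hp, by simpa using hpS⟩

/-- The exceptional vertex is where a path from `r` first enters the `H`-component. -/
lemma subsingleton_not_hasPathStartingIn (hHG : H ≤ G) {x r : V} (hx : G.Reachable x r) :
    {k | H.Reachable x k ∧ ¬G.HasPathStartingIn H k r}.Subsingleton := by
  obtain ⟨p, hp⟩ := hx.exists_isPath
  obtain ⟨e, he, q, hq, hqS⟩ := p.exists_isPath_support_tail_notMem {k | H.Reachable x k} hp
    ⟨x, p.start_mem_support, .refl _⟩
  suffices hstart : ∀ k, H.Reachable x k → k ≠ e → G.HasPathStartingIn H k r by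
    have hgate : ∀ k ∈ {k | H.Reachable x k ∧ ¬G.HasPathStartingIn H k r}, k = e :=
      fun k ⟨hk, hk'⟩ => by_contra fun hke => hk' (hstart k hk hke)
    exact fun i hi j hj => (hgate i hi).trans (hgate j hj).symm
  intro k hk hke
  obtain ⟨s, hs⟩ := (hk.symm.trans he).exists_isPath
  cases s with
  | nil => exact absurd rfl hke
  | cons hka s =>
    refine ⟨((Walk.cons hka s).mapLe hHG).append q, ?_, by simpa using hka⟩
    rw [Walk.isPath_def, Walk.support_append, List.nodup_append]
    refine ⟨(Walk.isPath_mapLe hHG).mpr hs |>.support_nodup,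
      hq.support_nodup.sublist (List.tail_sublist _), fun u hu v hv huv => ?_⟩
    rw [Walk.support_mapLe_eq_support] at hu
    obtain ⟨s₁, -, -⟩ := Walk.mem_support_iff_exists_append.mp hu
    exact hqS v hv (huv ▸ hk.trans ⟨s₁⟩)

def CyclesIn (G H₁ H₂ : SimpleGraph V) : Prop :=
  ∀ v (c : G.Walk v v), c.IsCycle →
    (∀ e ∈ c.edges, e ∈ H₁.edgeSet) ∨ (∀ e ∈ c.edges, e ∈ H₂.edgeSet)

/-- Paths to `r` leaving `k` along `ka ∈ H₁` and `kb ∈ H₂` close up, through `a ⋯ r ⋯ b`,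
to a cycle containing both edges. -/
lemma HasPathStartingIn.not_of_cyclesIn (hdisj : Disjoint H₁ H₂) (hcyc : CyclesIn G H₁ H₂)
    {k r : V} (h₁ : G.HasPathStartingIn H₁ k r) : ¬G.HasPathStartingIn H₂ k r := by
  classical
  have hnot : ∀ {x y}, H₁.Adj x y → ¬H₂.Adj x y := fun h h' => hdisj.le_bot ⟨h, h'⟩
  rintro ⟨_ | @⟨_, b, _, hkb, q⟩, hq, hb⟩
  · exact hb.ne rfl
  obtain ⟨_ | ⟨hka, p⟩, hp, ha⟩ := h₁
  · exact ha.ne rfl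
  rw [Walk.snd_cons] at ha hb
  rw [Walk.cons_isPath_iff] at hp hq
  let s := (p.append q.reverse).bypass
  have hks : k ∉ s.support := fun h => by
    have := (p.append q.reverse).support_bypass_subset_support (a := k) h
    simp only [Walk.support_append, Walk.support_reverse, List.mem_append] at this
    exact this.elim hp.2 fun h' => hq.2 (List.mem_reverse.mp (List.mem_of_mem_tail h'))
  have hcycle : (Walk.cons hka (s.concat hkb.symm)).IsCycle := by
    refine (Walk.cons_isCycle_iff _ _).mpr ⟨(p.append q.reverse).bypass_isPath.concat hks _, ?_⟩
    rw [Walk.edges_concat, List.concat_eq_append, List.mem_append, List.mem_singleton, not_or]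
    refine ⟨fun h => hks (s.fst_mem_support_of_mem_edges h), fun h => ?_⟩
    rcases Sym2.eq_iff.mp h with ⟨rfl, -⟩ | ⟨-, rfl⟩
    exacts [hkb.ne rfl, hnot ha hb]
  rcases hcyc _ _ hcycle with h | h
  · exact hnot (h s(b, k) (by simp)) hb.symm
  · exact hnot ha (h s(k, _) (by simp))

lemma exists_root (G : SimpleGraph V) (p₀ : V) :
    ∃ ρ : V → V, ρ p₀ = p₀ ∧
      ∀ v, G.Reachable v (ρ v) ∧ ∀ w, G.Reachable v w → ρ w = ρ v := by
  classical
  refine ⟨fun v => if G.Reachable p₀ v then p₀ else (G.connectedComponentMk v).out,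
    by simp, fun v => ⟨?_, fun w hvw => ?_⟩⟩
  · dsimp only
    split_ifs with h
    · exact h.symm
    · exact ConnectedComponent.eq.mp (Quot.out_eq _).symm
  · have hp₀ : G.Reachable p₀ w ↔ G.Reachable p₀ v :=
      ⟨(·.trans hvw.symm), (·.trans hvw)⟩
    simp only [hp₀, (ConnectedComponent.eq.mpr hvw).symm]

theorem exists_labelling_of_cyclesIn [DecidableEq V] (h₁ : H₁ ≤ G) (h₂ : H₂ ≤ G)
    (hdisj : Disjoint H₁ H₂) (hcyc : CyclesIn G H₁ H₂) (p₀ : V) :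
    ∃ X : V → Bool, X p₀ = false ∧
      (∀ i j, H₁.Reachable i j → X i = false → X j = false → i = j) ∧
      (∀ i j, H₂.Reachable i j → Function.update X p₀ true i = true →
        Function.update X p₀ true j = true → i = j) := by
  classical
  obtain ⟨ρ, hρ₀, hρ⟩ := G.exists_root p₀
  have hzone : ∀ {H}, H ≤ G → ∀ {i j} (hij : H.Reachable i j),
      ¬G.HasPathStartingIn H i (ρ i) → ¬G.HasPathStartingIn H j (ρ j) → i = j :=
    fun hHG i j hij hi hj => subsingleton_not_hasPathStartingIn hHG (hρ i).1 ⟨.refl _, hi⟩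
      ⟨hij, (hρ i).2 j (hij.mono hHG) ▸ hj⟩
  set X : V → Bool := fun v => decide (G.HasPathStartingIn H₁ v (ρ v))
  have hX₂ : ∀ v, Function.update X p₀ true v = true →
      ¬G.HasPathStartingIn H₂ v (ρ v) := by
    intro v hv
    by_cases hvp : v = p₀
    · rw [hvp, hρ₀]
      exact not_hasPathStartingIn_self p₀
    · rw [Function.update_of_ne hvp, decide_eq_true_iff] at hv
      exact hv.not_of_cyclesIn hdisj hcyc
  refine ⟨X, by simpa [X, hρ₀] using not_hasPathStartingIn_self p₀,
    fun i j hij hi hj => hzone h₁ hij (by simpa [X] using hi) (by simpa [X] using hj),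
    fun i j hij hi hj => hzone h₂ hij (hX₂ i hi) (hX₂ j hj)⟩

lemma Walk.getVert_val_add_one {v : V} (c : G.Walk v v) [NeZero c.length] (u : ZMod c.length) :
    c.getVert (u + 1).val = c.getVert (u.val + 1) := by
  rw [← ZMod.natCast_zmod_val u, ← Nat.cast_succ, ZMod.val_natCast, ZMod.val_natCast,
    Nat.mod_eq_of_lt (ZMod.val_lt u)]
  rcases (Nat.succ_le_of_lt (ZMod.val_lt u)).lt_or_eq with hlt | heq
  · rw [Nat.mod_eq_of_lt hlt]
  · rw [heq, Nat.mod_self, Walk.getVert_zero, ← Nat.succ_eq_add_one, heq, Walk.getVert_length]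

end SimpleGraph

open SimpleGraph

variable {c n : ℕ} {sm : Fin c → Bool} {ep : Fin c → Fin n × Fin n}

def arcGraph (sm : Fin c → Bool) (ep : Fin c → Fin n × Fin n) (v : Bool) :
    SimpleGraph (Fin n) :=
  SimpleGraph.fromRel fun i j => ∃ t, sm t = v ∧ ep t = (i, j)

lemma arcGraph_adj {v : Bool} {i j : Fin n} :
    (arcGraph sm ep v).Adj i j ↔
      i ≠ j ∧ ∃ t, sm t = v ∧ (ep t = (i, j) ∨ ep t = (j, i)) := by
  simp only [arcGraph, fromRel_adj]
  grind

lemma Conn.reachable {v : Bool} {i j : Fin n} (h : Conn sm ep v i j) :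
    (arcGraph sm ep v).Reachable i j := by
  induction h with
  | refl => rfl
  | @tail a b _ hab ih =>
    by_cases hab' : a = b
    · exact hab' ▸ ih
    · exact ih.trans (arcGraph_adj.mpr ⟨hab', hab⟩).reachable

lemma Homog.disjoint_arcGraph (hhom : Homog sm ep) :
    Disjoint (arcGraph sm ep true) (arcGraph sm ep false) := by
  refine disjoint_left.mpr fun i j h₁ h₀ => ?_
  obtain ⟨hij, t₁, ht₁, he₁⟩ := arcGraph_adj.mp h₁
  obtain ⟨-, t₀, ht₀, he₀⟩ := arcGraph_adj.mp h₀
  have ht : t₁ ≠ t₀ := by rintro rfl; simp_all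
  have hZ2 : ∀ a : ZMod 2, a = 0 ∨ a = 1 := by decide
  have := hhom 2 le_rfl ![t₁, t₀] ![i, j] ?_ ?_ ?_ 0 1
  · simp_all
  · intro a b
    rcases hZ2 a with rfl | rfl <;> rcases hZ2 b with rfl | rfl <;> simp [ht, ht.symm]
  · intro a b
    rcases hZ2 a with rfl | rfl <;> rcases hZ2 b with rfl | rfl <;> simp [hij, hij.symm]
  · intro a
    rcases hZ2 a with rfl | rfl
    · exact he₁
    · exact he₀.symm

lemma ZMod.two_ne_zero_of_three_le {k : ℕ} (hk : 3 ≤ k) : (2 : ZMod k) ≠ 0 := fun h =>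
  absurd (Nat.le_of_dvd two_pos ((ZMod.natCast_eq_zero_iff 2 k).mp (by exact_mod_cast h)))
    (by omega)

/-- An arc occurring twice in a cyclic sequence of distinct circles would force `k ∣ 2`. -/
lemma injective_arcs_of_three_le {k : ℕ} (hk : 3 ≤ k) {te : ZMod k → Fin c}
    {ve : ZMod k → Fin n} (hve : Function.Injective ve)
    (hte : ∀ u, ep (te u) = (ve u, ve (u + 1)) ∨ ep (te u) = (ve (u + 1), ve u)) :
    Function.Injective te := by
  intro a b hab
  rcases hte a with ha | ha <;> rcases hte b with hb | hb <;> rw [hab, hb, Prod.mk.injEq] at ha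
  · exact (hve ha.1).symm
  · exact absurd (by linear_combination hve ha.1 - hve ha.2) (ZMod.two_ne_zero_of_three_le hk)
  · exact absurd (by linear_combination hve ha.2 - hve ha.1) (ZMod.two_ne_zero_of_three_le hk)
  · exact (hve ha.2).symm

lemma Homog.cyclesIn_arcGraph (hhom : Homog sm ep) :
    CyclesIn (arcGraph sm ep true ⊔ arcGraph sm ep false) (arcGraph sm ep true)
      (arcGraph sm ep false) := by
  intro v cyc hcyc
  set k := cyc.length
  have hk : 3 ≤ k := hcyc.three_le_length
  have : NeZero k := ⟨by omega⟩
  let ve : ZMod k → Fin n := fun u => cyc.getVert u.val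
  have hve : ∀ u : ZMod k, ve (u + 1) = cyc.getVert (u.val + 1) := cyc.getVert_val_add_one
  have hadj : ∀ u, (arcGraph sm ep true ⊔ arcGraph sm ep false).Adj (ve u) (ve (u + 1)) :=
    fun u => hve u ▸ cyc.adj_getVert_succ (ZMod.val_lt u)
  have harc : ∀ u, ∃ t, ep t = (ve u, ve (u + 1)) ∨ ep t = (ve (u + 1), ve u) := by
    intro u
    rcases hadj u with h | h <;> obtain ⟨-, t, -, ht⟩ := arcGraph_adj.mp h <;> exact ⟨t, ht⟩
  choose te hte using harc
  have hve_inj : Function.Injective ve := fun a b hab => ZMod.val_injective k <|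
    hcyc.getVert_injOn' (by simp; have := ZMod.val_lt a; omega)
      (by simp; have := ZMod.val_lt b; omega) hab
  have hmono := hhom k (by omega) te ve (injective_arcs_of_three_le hk hve_inj hte) hve_inj hte
  suffices ∀ e ∈ cyc.edges, e ∈ (arcGraph sm ep (sm (te 0))).edgeSet by
    cases h : sm (te 0) <;> rw [h] at this
    exacts [Or.inr this, Or.inl this]
  intro e he
  induction e using Sym2.ind with | h x y => ?_
  obtain ⟨i, hi, hxy⟩ := (Walk.mk_mem_edges_iff_exists cyc).mp he
  have hiv : (i : ZMod k).val = i := by rw [ZMod.val_natCast, Nat.mod_eq_of_lt hi]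
  rw [← hxy, mem_edgeSet, arcGraph_adj]
  refine ⟨(cyc.adj_getVert_succ hi).ne, te i, hmono i 0, ?_⟩
  simpa only [ve, hve, hiv] using hte i

lemma card_filter_update_true {α : Type*} [Fintype α] [DecidableEq α] {f : α → Bool} {a : α}
    (ha : f a = false) :
    ((Finset.univ.filter fun l => Function.update f a true l = true).card : ℤ)
        - (Finset.univ.filter fun l => Function.update f a true l = false).card
      = (Finset.univ.filter fun l => f l = true).card
        - (Finset.univ.filter fun l => f l = false).card + 2 := by
  have htrue : (Finset.univ.filter fun l => Function.update f a true l = true)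
      = insert a (Finset.univ.filter fun l => f l = true) := by
    ext l; by_cases hl : l = a <;> simp [hl]
  have hfalse : (Finset.univ.filter fun l => f l = false)
      = insert a (Finset.univ.filter fun l => Function.update f a true l = false) := by
    ext l; by_cases hl : l = a <;> simp [hl, ha]
  rw [htrue, hfalse, Finset.card_insert_of_notMem (by simp [ha]),
    Finset.card_insert_of_notMem (by simp)]
  push_cast
  ring

theorem homogeneously_adequate_enhancements_general (c n : ℕ) (sm : Fin c → Bool)
    (ep : Fin c → Fin n × Fin n)
    (hhom : Homog sm ep)
    (p₀ : Fin n) :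
    ∃ Xm Xp : Fin n → Bool,
      Xm p₀ = true ∧ Xp p₀ = false ∧
      (∀ i, i ≠ p₀ → Xm i = Xp i) ∧
      (∀ i j, Conn sm ep true i j → Xm i = false → Xm j = false → i = j) ∧
      (∀ i j, Conn sm ep false i j → Xm i = true → Xm j = true → i = j) ∧
      (∀ i j, Conn sm ep true i j → Xp i = false → Xp j = false → i = j) ∧
      (∀ i j, Conn sm ep false i j → Xp i = true → Xp j = true → i = j) ∧
      ∀ w iw : ℤ,
        w + iw - (((Finset.univ.filter fun l => Xp l = true).card : ℤ)
            - ((Finset.univ.filter fun l => Xp l = false).card : ℤ))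
          = (w + iw - (((Finset.univ.filter fun l => Xm l = true).card : ℤ)
            - ((Finset.univ.filter fun l => Xm l = false).card : ℤ))) + 2 := by
  obtain ⟨X, hXp₀, hA, hB⟩ := exists_labelling_of_cyclesIn le_sup_left le_sup_right
    hhom.disjoint_arcGraph hhom.cyclesIn_arcGraph p₀
  have hup : ∀ i, X i = true → Function.update X p₀ true i = true := fun i hi => by
    by_cases h : i = p₀ <;> simp [h, hi]
  have hup' : ∀ i, Function.update X p₀ true i = false → X i = false := fun i hi => by
    by_cases h : i = p₀ <;> simp_all
  refine ⟨Function.update X p₀ true, X, Function.update_self .., hXp₀,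
    fun i hi => Function.update_of_ne hi ..,
    fun i j hij hi hj => hA i j hij.reachable (hup' i hi) (hup' j hj),
    fun i j hij => hB i j hij.reachable, fun i j hij => hA i j hij.reachable,
    fun i j hij hi hj => hB i j hij.reachable (hup i hi) (hup j hj), fun w iw => ?_⟩
  rw [card_filter_update_true hXp₀]
  ring

/-- Every homogeneously adequate state `x` (every arc joins distinct circles; no simple
cycle mixes A- and B-arcs), with any marked circle `p₀` (the circle through the marked
point `p`), admits enhancements `X⁻`, `X⁺`, identical away from `p₀`, labeling `p₀` by
`1` resp. `0`, such that in both every A-zone has at most one 0-labeled circle and every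
B-zone has at most one 1-labeled circle; consequently `j(X⁺) = j(X⁻) + 2`, where
`j = w + i − τ` and `τ = #(1-labels) − #(0-labels)`. -/
theorem homogeneously_adequate_enhancements (c n : ℕ) (sm : Fin c → Bool)
    (ep : Fin c → Fin n × Fin n)
    (hadq : ∀ t, (ep t).1 ≠ (ep t).2)
    (hhom : Homog sm ep)
    (p₀ : Fin n) :
    ∃ Xm Xp : Fin n → Bool,
      Xm p₀ = true ∧ Xp p₀ = false ∧
      (∀ i, i ≠ p₀ → Xm i = Xp i) ∧
      (∀ i j, Conn sm ep true i j → Xm i = false → Xm j = false → i = j) ∧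
      (∀ i j, Conn sm ep false i j → Xm i = true → Xm j = true → i = j) ∧
      (∀ i j, Conn sm ep true i j → Xp i = false → Xp j = false → i = j) ∧
      (∀ i j, Conn sm ep false i j → Xp i = true → Xp j = true → i = j) ∧
      ∀ w iw : ℤ,
        w + iw - (((Finset.univ.filter fun l => Xp l = true).card : ℤ)
            - ((Finset.univ.filter fun l => Xp l = false).card : ℤ))
          = (w + iw - (((Finset.univ.filter fun l => Xm l = true).card : ℤ)
            - ((Finset.univ.filter fun l => Xm l = false).card : ℤ))) + 2 :=
  homogeneously_adequate_enhancements_general c n sm ep hhom p₀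
end
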